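/- Let n ≥ 5 and let M_d be the n×n symmetric matrix with diagonal entries 1, entries -d at positions (i,j) with i ≢ j±1 (mod n) and i ≠ j, and 0 at positions (i,j) with i ≡ j±1 (mod n), i ≠ j. Then for all sufficiently large d > 0, the number of positive eigenvalues of M_d equals 2⌊n/3⌋ and the number of negative eigenvalues equals n - 2⌊n/3⌋. -/

import Mathlib

/-!
`M_d` is the circulant matrix on `ZMod n` with first column `gramRow n d`, so the Fourier matrix
`(ψ (k * j))` of the standard character `ψ` of `ZMod n` diagonalizes it, with eigenvalues
`1 + d * c_k`, where `c_k = gramSlope n k` is `3 - n` for `k = 0` and `1 + 2 cos (2πk/n)`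
otherwise. For large `d` the sign of `1 + d * c_k` is `+` when `c_k ≥ 0` (even when `c_k = 0`)
and `-` when `c_k < 0`, and `c_k ≥ 0` exactly when `2πk/n` lies within `2π/3` of `0` modulo
`2π`, i.e. for the `2⌊n/3⌋` residues `1 ≤ k ≤ n/3` and `2n/3 ≤ k < n`.
-/

open Matrix Polynomial Finset Filter Real

namespace Matrix

variable {ι R : Type*} [Fintype ι] [DecidableEq ι] [CommRing R]

lemma charpoly_eq_of_mul_eq_mul {A P D : Matrix ι ι R} (hP : IsUnit P) (h : A * P = P * D) :
    A.charpoly = D.charpoly := by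
  obtain ⟨u, rfl⟩ := hP
  have hA : A = u.val * D * u.val⁻¹ := by
    rw [← h, mul_assoc, ← coe_units_inv, Units.mul_inv, mul_one]
  rw [hA, charpoly_units_conj]

lemma circulant_mulVec_addChar {G : Type*} [AddCommGroup G] [Fintype G] (v : G → R)
    (ψ : AddChar G R) : circulant v *ᵥ ψ = (∑ m, v m * ψ (-m)) • ⇑ψ := by
  ext i
  simp only [mulVec, dotProduct, circulant_apply, Pi.smul_apply, smul_eq_mul, sum_mul]
  refine Fintype.sum_equiv (Equiv.subLeft i) _ _ fun j => ?_
  rw [Equiv.subLeft_apply, mul_assoc, ← AddChar.map_add_eq_mul, neg_sub, sub_add_cancel]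

lemma IsHermitian.map_eigenvalues_eq {A : Matrix ι ι ℝ} (hA : A.IsHermitian) {f : ι → ℝ}
    (h : A.charpoly = ∏ i, (X - C (f i))) : univ.val.map hA.eigenvalues = univ.val.map f := by
  have hroots (g : ι → ℝ) : (∏ i, (X - C (g i))).roots = univ.val.map g := by
    rw [roots_prod _ _ (prod_ne_zero_iff.2 fun i _ => X_sub_C_ne_zero _)]
    simp
  rw [← hroots, ← hroots, ← h, hA.charpoly_eq]
  rfl

end Matrix

namespace ZMod

variable {n : ℕ} [NeZero n]

noncomputable def fourierMatrix (n : ℕ) [NeZero n] : Matrix (ZMod n) (ZMod n) ℂ :=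
  of fun j k => stdAddChar (k * j)

lemma fourierMatrix_mul_conjTranspose : fourierMatrix n * (fourierMatrix n)ᴴ = (n : ℂ) • 1 := by
  ext i j
  simp only [fourierMatrix, mul_apply, conjTranspose_apply, of_apply, Complex.star_def,
    ← AddChar.map_neg_eq_conj, ← AddChar.map_add_eq_mul]
  simp_rw [← mul_neg, ← mul_add, AddChar.sum_mulShift _ (isPrimitive_stdAddChar n)]
  by_cases hij : i = j <;> simp [hij, sub_eq_zero, ← sub_eq_add_neg]

lemma isUnit_fourierMatrix : IsUnit (fourierMatrix n) := by
  refine IsUnit.of_mul_eq_one ((n : ℂ)⁻¹ • (fourierMatrix n)ᴴ) ?_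
  rw [Matrix.mul_smul, fourierMatrix_mul_conjTranspose, smul_smul,
    inv_mul_cancel₀ (Nat.cast_ne_zero.2 (NeZero.ne n)), one_smul]

lemma circulant_mul_fourierMatrix (v : ZMod n → ℂ) :
    circulant v * fourierMatrix n =
      fourierMatrix n * diagonal fun k => ∑ m, v m * stdAddChar (-(k * m)) := by
  ext j k
  rw [mul_diagonal, mul_apply]
  simpa [mulVec, dotProduct, fourierMatrix, mul_comm] using
    congrFun (circulant_mulVec_addChar v (stdAddChar.mulShift k)) j

lemma charpoly_circulant (v : ZMod n → ℂ) :
    (circulant v).charpoly = ∏ k, (X - C (∑ m, v m * stdAddChar (-(k * m)))) := by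
  rw [charpoly_eq_of_mul_eq_mul isUnit_fourierMatrix (circulant_mul_fourierMatrix v),
    charpoly_diagonal]

lemma stdAddChar_add_stdAddChar_neg (k : ZMod n) :
    stdAddChar k + stdAddChar (-k) = ((2 * cos (2 * π * k.val / n) : ℝ) : ℂ) := by
  rw [AddChar.map_neg_eq_conj, Complex.add_conj, stdAddChar_apply, toCircle_apply,
    show 2 * (π : ℂ) * Complex.I * k.val / n = ((2 * π * k.val / n : ℝ) : ℂ) * Complex.I by
      push_cast; ring,
    Complex.exp_ofReal_mul_I_re]

lemma card_filter_val (p : ℕ → Prop) [DecidablePred p] :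
    #{k : ZMod n | p k.val} = #{m ∈ range n | p m} := by
  refine card_nbij' val (fun m => (m : ZMod n)) ?_ ?_ ?_ ?_ <;> intro x hx <;>
    simp_all [val_lt, val_natCast, Nat.mod_eq_of_lt]

end ZMod

lemma Finset.card_filter_comp_eq_of_map_eq {ι α : Type*} [Fintype ι] {f g : ι → α}
    (h : univ.val.map f = univ.val.map g) (p : α → Prop) [DecidablePred p] :
    #{i | p (f i)} = #{i | p (g i)} := by
  simp only [card_def, filter_val]
  rw [← Multiset.countP_map, h, Multiset.countP_map]

lemma card_filter_range_within_third_of_zero (n : ℕ) :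
    #{m ∈ range n | m ≠ 0 ∧ (3 * m ≤ n ∨ 2 * n ≤ 3 * m)} = 2 * (n / 3) := by
  have h : {m ∈ range n | m ≠ 0 ∧ (3 * m ≤ n ∨ 2 * n ≤ 3 * m)} =
      Icc 1 (n / 3) ∪ Ico (n - n / 3) n := by
    ext m
    simp only [mem_filter, mem_range, mem_union, mem_Icc, mem_Ico]
    omega
  rw [h, card_union_of_disjoint, Nat.card_Icc, Nat.card_Ico]
  · omega
  · rw [disjoint_left]
    intro m
    simp only [mem_Icc, mem_Ico]
    omega

lemma Real.neg_half_le_cos_iff {θ : ℝ} (h₀ : 0 ≤ θ) (h₁ : θ ≤ 2 * π) :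
    -(1 / 2) ≤ cos θ ↔ θ ≤ 2 * π / 3 ∨ 4 * π / 3 ≤ θ := by
  have hπ := pi_pos
  have hcos : cos (2 * π / 3) = -(1 / 2) := by
    rw [show 2 * π / 3 = π - π / 3 by ring, cos_pi_sub, cos_pi_div_three]
  have hanti {x : ℝ} (hx₀ : 0 ≤ x) (hx₁ : x ≤ π) : -(1 / 2) ≤ cos x ↔ x ≤ 2 * π / 3 := by
    rw [← hcos]
    exact strictAntiOn_cos.le_iff_ge ⟨by positivity, by linarith⟩ ⟨hx₀, hx₁⟩
  rcases le_or_gt θ π with h | h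
  · rw [hanti h₀ h]
    exact ⟨Or.inl, by rintro (h' | h') <;> linarith⟩
  · rw [← cos_two_pi_sub, hanti (by linarith) (by linarith)]
    exact ⟨fun h' => Or.inr (by linarith), by rintro (h' | h') <;> linarith⟩

lemma eventually_pos_iff_and_neg_iff_one_add_mul (c : ℝ) :
    ∀ᶠ d in atTop, (0 < 1 + d * c ↔ 0 ≤ c) ∧ (1 + d * c < 0 ↔ c < 0) := by
  rcases le_or_gt 0 c with hc | hc
  · filter_upwards [eventually_ge_atTop 0] with d hd
    have : 0 < 1 + d * c := by nlinarith
    constructor <;> constructor <;> intro <;> linarith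
  · filter_upwards [eventually_gt_atTop (-c⁻¹)] with d hd
    have : d * c < -1 := by
      have := mul_lt_mul_of_neg_right hd hc
      rwa [neg_mul, inv_mul_cancel₀ hc.ne] at this
    constructor <;> constructor <;> intro <;> linarith

def gramRow {R : Type*} [Ring R] (n : ℕ) (d : R) : ZMod n → R :=
  fun m => if m = 0 then 1 else if m = 1 ∨ m = -1 then 0 else -d

noncomputable def gramSlope (n : ℕ) (k : ZMod n) : ℝ :=
  if k = 0 then 3 - n else 1 + 2 * cos (2 * π * k.val / n)

section gram

variable {R : Type*} [Ring R] {n : ℕ}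

lemma of_eq_circulant_gramRow (d : R) :
    (of fun i j : ZMod n => if i = j then 1 else if i = j + 1 ∨ j = i + 1 then (0 : R) else -d) =
      circulant (gramRow n d) := by
  ext i j
  have h0 : i = j ↔ i - j = 0 := sub_eq_zero.symm
  have h1 : i = j + 1 ↔ i - j = 1 := by rw [sub_eq_iff_eq_add, add_comm]
  have h2 : j = i + 1 ↔ i - j = -1 := by constructor <;> intro h <;> linear_combination -h
  simp only [of_apply, circulant_apply, gramRow, h0, h1, h2]

lemma gramRow_eq (hn : 3 ≤ n) (d : R) (m : ZMod n) :
    gramRow n d m = -d + (if m = 0 then 1 + d else 0) + (if m = 1 then d else 0) +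
      (if m = -1 then d else 0) := by
  have : Fact (1 < n) := ⟨by omega⟩
  have : Fact (2 < n) := ⟨hn⟩
  have h01 : (0 : ZMod n) ≠ 1 := zero_ne_one
  have h0m1 : (0 : ZMod n) ≠ -1 := by simp
  have h1m1 : (1 : ZMod n) ≠ -1 := ZMod.neg_one_ne_one.symm
  unfold gramRow
  split_ifs <;> simp_all

variable [NeZero n]

lemma sum_gramRow_mul_stdAddChar (hn : 3 ≤ n) (d : ℝ) (k : ZMod n) :
    ∑ m, gramRow n (d : ℂ) m * ZMod.stdAddChar (-(k * m)) = ((1 + d * gramSlope n k : ℝ) : ℂ) := by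
  simp only [gramRow_eq hn, add_mul, ite_mul, zero_mul, sum_add_distrib, sum_ite_eq', mem_univ,
    if_true, ← Finset.mul_sum]
  have hsum : ∑ m, ZMod.stdAddChar (-(k * m)) = if k = 0 then (n : ℂ) else 0 := by
    simp_rw [show ∀ m : ZMod n, -(k * m) = m * -k from fun m => by ring,
      AddChar.sum_mulShift _ (ZMod.isPrimitive_stdAddChar n), neg_eq_zero, ZMod.card,
      Nat.cast_ite, Nat.cast_zero]
  rw [hsum, gramSlope]
  split_ifs with hk
  · subst hk
    simp only [zero_mul, neg_zero, AddChar.map_zero_eq_one]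
    push_cast
    ring
  · have hcos := ZMod.stdAddChar_add_stdAddChar_neg k
    simp only [mul_zero, neg_zero, AddChar.map_zero_eq_one, mul_one, mul_neg, neg_neg]
    push_cast at hcos ⊢
    linear_combination (d : ℂ) * hcos

lemma charpoly_circulant_gramRow (hn : 3 ≤ n) (d : ℝ) :
    (circulant (gramRow n d)).charpoly = ∏ k, (X - C (1 + d * gramSlope n k)) := by
  apply Polynomial.map_injective Complex.ofRealHom Complex.ofReal_injective
  have hrow : (fun m => Complex.ofRealHom (gramRow n d m)) = gramRow n (d : ℂ) := by
    ext m
    simp only [gramRow, apply_ite Complex.ofRealHom, map_one, map_zero, map_neg,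
      Complex.ofRealHom_eq_coe]
  rw [← charpoly_map, map_circulant, hrow, ZMod.charpoly_circulant, Polynomial.map_prod]
  simp [sum_gramRow_mul_stdAddChar hn]

lemma gramSlope_nonneg_iff (hn : 4 ≤ n) (k : ZMod n) :
    0 ≤ gramSlope n k ↔ k.val ≠ 0 ∧ (3 * k.val ≤ n ∨ 2 * n ≤ 3 * k.val) := by
  rw [gramSlope, ZMod.val_ne_zero]
  split_ifs with hk
  · have : (4 : ℝ) ≤ n := by exact_mod_cast hn
    simp only [hk, ne_eq, not_true_eq_false, false_and, iff_false, not_le]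
    linarith
  · have hn₀ : (0 : ℝ) < n := by positivity
    have hk₁ : (k.val : ℝ) ≤ n := by exact_mod_cast (ZMod.val_lt k).le
    have h2π : (0 : ℝ) < 2 * π := by positivity
    have hθ : 2 * π * k.val / n ≤ 2 * π := by rw [div_le_iff₀ hn₀]; nlinarith
    rw [show 0 ≤ 1 + 2 * cos (2 * π * k.val / n) ↔ -(1 / 2) ≤ cos (2 * π * k.val / n) by
        constructor <;> intro <;> linarith,
      neg_half_le_cos_iff (by positivity) hθ, div_le_div_iff₀ hn₀ three_pos,
      div_le_div_iff₀ three_pos hn₀]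
    simp only [hk, ne_eq, not_false_eq_true, true_and]
    refine or_congr ?_ ?_ <;> rw [← Nat.cast_le (α := ℝ)] <;> push_cast <;>
      rw [show 2 * π * k.val * 3 = 2 * π * (3 * k.val) by ring]
    · rw [mul_le_mul_iff_right₀ h2π]
    · rw [show 4 * π * n = 2 * π * (2 * n) by ring, mul_le_mul_iff_right₀ h2π]

lemma card_gramSlope_nonneg (hn : 4 ≤ n) : #{k | 0 ≤ gramSlope n k} = 2 * (n / 3) := by
  simp_rw [gramSlope_nonneg_iff hn]
  exact (ZMod.card_filter_val _).trans (card_filter_range_within_third_of_zero n)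

lemma card_gramSlope_neg (hn : 4 ≤ n) : #{k | gramSlope n k < 0} = n - 2 * (n / 3) := by
  simp_rw [← not_le]
  rw [filter_not, card_sdiff_of_subset (filter_subset _ _), card_univ, ZMod.card,
    card_gramSlope_nonneg hn]

end gram

theorem signature_of_cycle_complement_gram_matrix (n : ℕ) [NeZero n] (hn : 5 ≤ n) :
    let M : ℝ → Matrix (ZMod n) (ZMod n) ℝ := fun d =>
      Matrix.of fun i j =>
        if i = j then 1 else if i = j + 1 ∨ j = i + 1 then 0 else -d
    ∃ d₀ : ℝ, ∀ d ≥ d₀, 0 < d →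
      ∀ hM : (M d).IsHermitian,
        (Finset.univ.filter fun k => 0 < hM.eigenvalues k).card = 2 * (n / 3) ∧
        (Finset.univ.filter fun k => hM.eigenvalues k < 0).card = n - 2 * (n / 3) := by
  intro M
  obtain ⟨d₀, hd₀⟩ := eventually_atTop.1 <|
    eventually_all.2 fun k => eventually_pos_iff_and_neg_iff_one_add_mul (gramSlope n k)
  refine ⟨d₀, fun d hd _ hM => ?_⟩
  have hspec := hM.map_eigenvalues_eq <| by
    rw [show M d = circulant (gramRow n d) from of_eq_circulant_gramRow d]
    exact charpoly_circulant_gramRow (by omega) d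
  refine ⟨(card_filter_comp_eq_of_map_eq hspec (0 < ·)).trans ?_,
    (card_filter_comp_eq_of_map_eq hspec (· < 0)).trans ?_⟩
  · rw [filter_congr fun k _ => (hd₀ d hd k).1, card_gramSlope_nonneg (by omega)]
  · rw [filter_congr fun k _ => (hd₀ d hd k).2, card_gramSlope_neg (by omega)]
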